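/- arXiv:2406.15840 — 3 statements merged into one kernel-verified Lean document; each statement's English description precedes it below -/
import Mathlib

section
/- Let β > 0 and λ_{n+1} = λ_n - β λ_n² with λ_0 ∈ (0, 1/β). Then λ_0/(1 + (β λ_0/(1 - β λ_0)) n) ≤ λ_n ≤ λ_0/(1 + β λ_0 n) for all n. -/
/-!
The substitution `μ = 1/λ` linearises the recursion: `1/λ_{n+1} = 1/λ_n + β/(1 - βλ_n)`.
Since `λ_n` decreases within `(0, λ_0]`, the increment lies between `β` and `β/(1 - βλ_0)`,
so `1/λ_0 + βn ≤ 1/λ_n ≤ 1/λ_0 + βn/(1 - βλ_0)`; inverting gives both bounds.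
-/

section LinearGrowth

variable {α : Type*} [AddCommGroup α] [PartialOrder α] [IsOrderedAddMonoid α] {u : ℕ → α} {a : α}

theorem add_nsmul_le_of_le_sub (h : ∀ n, a ≤ u (n + 1) - u n) (n : ℕ) : u 0 + n • a ≤ u n := by
  induction n with
  | zero => simp
  | succ n ih => simpa [succ_nsmul, ← add_assoc] using add_le_add ih (h n)

theorem le_add_nsmul_of_sub_le (h : ∀ n, u (n + 1) - u n ≤ a) (n : ℕ) : u n ≤ u 0 + n • a := by
  induction n with
  | zero => simp
  | succ n ih => simpa [succ_nsmul, ← add_assoc] using add_le_add ih (h n)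

end LinearGrowth

theorem one_div_sub_mul_sq {β x : ℝ} (hx : x ≠ 0) (hβx : β * x ≠ 1) :
    1 / (x - β * x ^ 2) = 1 / x + β / (1 - β * x) := by
  have : 1 - β * x ≠ 0 := sub_ne_zero.mpr hβx.symm
  rw [show x - β * x ^ 2 = x * (1 - β * x) by ring, div_add_div _ _ hx this]
  congr 1
  ring

theorem le_div_one_add_mul_iff {x y c t : ℝ} (hx : 0 < x) (hy : 0 < y) (hc : 0 ≤ c) (ht : 0 ≤ t) :
    y ≤ x / (1 + c * x * t) ↔ 1 / x + c * t ≤ 1 / y := by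
  rw [show x / (1 + c * x * t) = 1 / (1 / x + c * t) by field_simp]
  exact le_one_div hy (by positivity)

theorem div_one_add_mul_le_iff {x y c t : ℝ} (hx : 0 < x) (hy : 0 < y) (hc : 0 ≤ c) (ht : 0 ≤ t) :
    x / (1 + c * x * t) ≤ y ↔ 1 / y ≤ 1 / x + c * t := by
  rw [show x / (1 + c * x * t) = 1 / (1 / x + c * t) by field_simp]
  exact one_div_le (by positivity) hy

section Logistic

variable {β : ℝ} {l : ℕ → ℝ}

theorem logistic_antitone (hβ : 0 ≤ β) (hrec : ∀ n, l (n + 1) = l n - β * l n ^ 2) :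
    Antitone l :=
  antitone_nat_of_succ_le fun n => by rw [hrec n]; nlinarith [sq_nonneg (l n)]

theorem logistic_pos (hβ : 0 ≤ β) (hrec : ∀ n, l (n + 1) = l n - β * l n ^ 2)
    (hl0 : 0 < l 0) (hβl0 : β * l 0 < 1) (n : ℕ) : 0 < l n := by
  induction n with
  | zero => exact hl0
  | succ n ih =>
    have hβln : β * l n < 1 := by
      nlinarith [logistic_antitone hβ hrec (Nat.zero_le n)]
    rw [hrec n, show l n - β * l n ^ 2 = l n * (1 - β * l n) by ring]
    exact mul_pos ih (by linarith)

end Logistic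

theorem stmt_2 (β : ℝ) (hβ : 0 < β) (l : ℕ → ℝ)
    (h0 : l 0 ∈ Set.Ioo 0 (1/β))
    (hrec : ∀ n, l (n+1) = l n - β * (l n)^2) :
    ∀ n : ℕ, l 0 / (1 + (β * l 0 / (1 - β * l 0)) * n) ≤ l n ∧
      l n ≤ l 0 / (1 + β * l 0 * n) := by
  obtain ⟨hl0, hl0β⟩ := h0
  have hβl0 : β * l 0 < 1 := by rwa [lt_div_iff₀ hβ, mul_comm] at hl0β
  have hanti := logistic_antitone hβ.le hrec
  have hpos := logistic_pos hβ.le hrec hl0 hβl0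
  have hβl (n : ℕ) : β * l n < 1 := by nlinarith [hanti (Nat.zero_le n)]
  have hstep (n : ℕ) : 1 / l (n + 1) - 1 / l n = β / (1 - β * l n) := by
    rw [hrec n, one_div_sub_mul_sq (hpos n).ne' (hβl n).ne, add_sub_cancel_left]
  have hstep_ge (n : ℕ) : β ≤ 1 / l (n + 1) - 1 / l n := by
    rw [hstep n]
    exact le_div_self hβ.le (by linarith [hβl n]) (by nlinarith [hpos n])
  have hstep_le (n : ℕ) : 1 / l (n + 1) - 1 / l n ≤ β / (1 - β * l 0) := by
    rw [hstep n]
    exact div_le_div_of_nonneg_left hβ.le (by linarith) (by nlinarith [hanti (Nat.zero_le n)])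
  intro n
  constructor
  · rw [mul_div_right_comm, div_one_add_mul_le_iff hl0 (hpos n) (by positivity) n.cast_nonneg]
    simpa [mul_comm] using le_add_nsmul_of_sub_le (u := fun n => 1 / l n) hstep_le n
  · rw [le_div_one_add_mul_iff hl0 (hpos n) hβ.le n.cast_nonneg]
    simpa [mul_comm] using add_nsmul_le_of_le_sub (u := fun n => 1 / l n) hstep_ge n
end

section
/- Let β > 0 and λ_{n+1} = λ_n - β λ_n² with λ_0 ∈ (0, 1/β). Then the series Σ_{k=0}^∞ λ_k² converges, with Σ_{k=0}^{n-1} λ_k² ≤ λ_0(λ_0 + 1/β) for all n. -/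
/-! Each step removes exactly `β λ_k²`, so `β ∑_{k<n} λ_k² = λ_0 - λ_n` telescopes; the interval
`(0, 1/β)` is invariant under `x ↦ x - β x²`, hence `λ_n > 0` and the partial sums stay below
`λ_0 / β ≤ λ_0 (λ_0 + 1/β)`. -/

open Finset Set

lemma sub_mul_sq_mem_Ioo {β x : ℝ} (hβ : 0 < β) (hx : x ∈ Ioo 0 (1 / β)) :
    x - β * x ^ 2 ∈ Ioo 0 x := by
  obtain ⟨hx0, hxβ⟩ := hx
  have hβx : β * x < 1 := by rwa [lt_div_iff₀ hβ, mul_comm] at hxβ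
  constructor <;> nlinarith [mul_pos hβ (mul_pos hx0 hx0)]

lemma mem_Ioo_of_logistic {β : ℝ} (hβ : 0 < β) {l : ℕ → ℝ} (h0 : l 0 ∈ Ioo 0 (1 / β))
    (hrec : ∀ n, l (n + 1) = l n - β * l n ^ 2) (n : ℕ) : l n ∈ Ioo 0 (1 / β) := by
  induction n with
  | zero => exact h0
  | succ n ih =>
    obtain ⟨hpos, hlt⟩ := sub_mul_sq_mem_Ioo hβ ih
    rw [hrec n]
    exact ⟨hpos, hlt.trans ih.2⟩

lemma mul_sum_sq_eq_sub_of_logistic {β : ℝ} {l : ℕ → ℝ}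
    (hrec : ∀ n, l (n + 1) = l n - β * l n ^ 2) (n : ℕ) :
    β * ∑ k ∈ range n, l k ^ 2 = l 0 - l n := by
  rw [mul_sum, ← sum_range_sub' l n]
  exact sum_congr rfl fun k _ => by rw [hrec k]; ring

lemma sum_sq_le_div_of_logistic {β : ℝ} (hβ : 0 < β) {l : ℕ → ℝ} (h0 : l 0 ∈ Ioo 0 (1 / β))
    (hrec : ∀ n, l (n + 1) = l n - β * l n ^ 2) (n : ℕ) :
    ∑ k ∈ range n, l k ^ 2 ≤ l 0 / β := by
  rw [le_div_iff₀ hβ, mul_comm, mul_sum_sq_eq_sub_of_logistic hrec n]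
  linarith [(mem_Ioo_of_logistic hβ h0 hrec n).1]

theorem stmt_6 (β : ℝ) (hβ : 0 < β) (l : ℕ → ℝ)
    (h0 : l 0 ∈ Set.Ioo 0 (1/β))
    (hrec : ∀ n, l (n+1) = l n - β * (l n)^2) :
    Summable (fun k => (l k)^2) ∧
      ∀ n : ℕ, ∑ k ∈ Finset.range n, (l k)^2 ≤ l 0 * (l 0 + 1/β) := by
  have hdiv_le : l 0 / β ≤ l 0 * (l 0 + 1 / β) := by
    rw [mul_add, mul_one_div]
    nlinarith [h0.1]
  have hbound : ∀ n, ∑ k ∈ range n, l k ^ 2 ≤ l 0 * (l 0 + 1 / β) := fun n =>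
    (sum_sq_le_div_of_logistic hβ h0 hrec n).trans hdiv_le
  exact ⟨summable_of_sum_range_le (fun k => sq_nonneg (l k)) hbound, hbound⟩
end

section
/- Let β > 0, β_3 < 0, and λ solve λ'(t) = -β λ² - β_3 λ³ with λ_0 ∈ (0, -β/β_3). Then λ(t) is positive and monotone decreasing, λ(t) ≤ 1/(1/λ_0 + (β - |β_3| λ_0) t), and t λ(t) → 1/β as t → ∞. -/
/-!
Both roots `0` and `-β/β₃` of the cubic vector field are equilibria, so by uniqueness of solutions
the trajectory cannot reach them and stays in `(0, -β/β₃)`, where the field is negative. There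
`1/λ` has derivative `β + β₃ λ`, which is at least `β + β₃ λ₀ = β - |β₃| λ₀` because `λ` decreases;
integrating gives the bound. As `λ → 0` this derivative tends to `β`, hence `1/λ(t) ~ β t`.
-/

open Set Filter Topology

theorem ODE_solution_ne_of_apply_eq_zero {E : Type*} [NormedAddCommGroup E] [NormedSpace ℝ E]
    {f : E → E} (hf : LocallyLipschitz f) {x : ℝ → E} {c : E} {a b : ℝ} (hab : a ≤ b)
    (hx : ∀ t ∈ Icc a b, HasDerivAt x (f (x t)) t) (hc : f c = 0) (ha : x a ≠ c) : x b ≠ c := by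
  intro hb
  have hcont : ContinuousOn x (Icc a b) := fun t ht => (hx t ht).continuousAt.continuousWithinAt
  set s := insert c (x '' Icc a b)
  obtain ⟨K, hK⟩ := (hf.locallyLipschitzOn (s := s)).exists_lipschitzOnWith_of_compact
    ((isCompact_Icc.image_of_continuousOn hcont).insert c)
  refine ha (ODE_solution_unique_of_mem_Icc_left (v := fun _ => f) (s := fun _ => s)
    (g := fun _ => c) (fun _ _ => hK) hcont
    (fun t ht => (hx t (Ioc_subset_Icc_self ht)).hasDerivWithinAt)
    (fun t ht => mem_insert_of_mem _ (mem_image_of_mem _ (Ioc_subset_Icc_self ht)))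
    continuousOn_const (fun t _ => ?_) (fun _ _ => mem_insert _ _) hb ⟨le_rfl, hab⟩)
  simpa only [hc] using hasDerivWithinAt_const t (Iic t) c

theorem ODE_solution_mem_Ioo_of_apply_eq_zero {f : ℝ → ℝ} (hf : LocallyLipschitz f)
    {x : ℝ → ℝ} {p q a b : ℝ} (hab : a ≤ b) (hx : ∀ t ∈ Icc a b, HasDerivAt x (f (x t)) t)
    (hp : f p = 0) (hq : f q = 0) (ha : x a ∈ Ioo p q) : x b ∈ Ioo p q := by
  have hcont : ContinuousOn x (Icc a b) := fun t ht => (hx t ht).continuousAt.continuousWithinAt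
  have himage := isPreconnected_Icc.image x hcont
  have hxa : x a ∈ x '' Icc a b := mem_image_of_mem x ⟨le_rfl, hab⟩
  have hxb : x b ∈ x '' Icc a b := mem_image_of_mem x ⟨hab, le_rfl⟩
  have hreach {c : ℝ} (hc : f c = 0) (hac : x a ≠ c) (hcx : c ∈ x '' Icc a b) : False := by
    obtain ⟨s, hs, hsc⟩ := hcx
    exact ODE_solution_ne_of_apply_eq_zero hf hs.1
      (fun t ht => hx t ⟨ht.1, ht.2.trans hs.2⟩) hc hac hsc
  by_contra h
  rcases not_and_or.1 h with hbp | hbq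
  · exact hreach hp ha.1.ne' (himage.Icc_subset hxb hxa ⟨not_lt.1 hbp, ha.1.le⟩)
  · exact hreach hq ha.2.ne (himage.Icc_subset hxa hxb ⟨ha.2.le, not_lt.1 hbq⟩)

theorem mul_sub_le_sub_of_hasDerivAt {g g' : ℝ → ℝ} {C a b : ℝ} (hab : a ≤ b)
    (hg : ∀ t ∈ Icc a b, HasDerivAt g (g' t) t) (hC : ∀ t ∈ Icc a b, C ≤ g' t) :
    C * (b - a) ≤ g b - g a := by
  refine (convex_Icc a b).mul_sub_le_image_sub_of_le_deriv
    (fun t ht => (hg t ht).continuousAt.continuousWithinAt) (fun t ht => ?_) (fun t ht => ?_)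
    a ⟨le_rfl, hab⟩ b ⟨hab, le_rfl⟩ hab
  all_goals rw [interior_Icc] at ht
  · exact (hg t (Ioo_subset_Icc_self ht)).differentiableAt.differentiableWithinAt
  · rw [(hg t (Ioo_subset_Icc_self ht)).deriv]
    exact hC t (Ioo_subset_Icc_self ht)

theorem eventually_lt_div_self_of_le_deriv {g g' : ℝ → ℝ} {a b : ℝ} (hab : a < b)
    (hg : ∀ᶠ t in atTop, HasDerivAt g (g' t) t ∧ b ≤ g' t) : ∀ᶠ t in atTop, a < g t / t := by
  obtain ⟨T, hT⟩ := eventually_atTop.1 hg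
  have hsmall : ∀ᶠ t in atTop, a - b < (g T - b * T) / t :=
    (tendsto_const_nhds.div_atTop tendsto_id).eventually (lt_mem_nhds (sub_neg.2 hab))
  filter_upwards [hsmall, eventually_ge_atTop T, eventually_gt_atTop 0] with t hsmall hTt ht
  have := mul_sub_le_sub_of_hasDerivAt hTt (fun s hs => (hT s hs.1).1) (fun s hs => (hT s hs.1).2)
  rw [lt_div_iff₀ ht] at hsmall ⊢
  linarith

theorem tendsto_div_self_atTop_of_hasDerivAt {g g' : ℝ → ℝ} {L : ℝ}
    (hg : ∀ᶠ t in atTop, HasDerivAt g (g' t) t) (hg' : Tendsto g' atTop (𝓝 L)) :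
    Tendsto (fun t => g t / t) atTop (𝓝 L) := by
  refine tendsto_order.2 ⟨fun a ha => ?_, fun a ha => ?_⟩
  · obtain ⟨b, hab, hbL⟩ := exists_between ha
    exact eventually_lt_div_self_of_le_deriv hab
      (hg.and ((hg'.eventually (lt_mem_nhds hbL)).mono fun _ => le_of_lt))
  · obtain ⟨b, hLb, hba⟩ := exists_between ha
    have hneg := eventually_lt_div_self_of_le_deriv (g := -g) (g' := -g') (neg_lt_neg hba)
      ((hg.and (hg'.eventually (gt_mem_nhds hLb))).mono fun t h => ⟨h.1.neg, neg_le_neg h.2.le⟩)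
    filter_upwards [hneg] with t ht
    rw [Pi.neg_apply, neg_div, neg_lt_neg_iff] at ht
    exact ht

theorem add_mul_pos_of_lt_neg_div {a b y : ℝ} (hb : b < 0) (hy : y < -a / b) : 0 < a + b * y := by
  have := (lt_div_iff_of_neg hb).1 hy
  linarith

section Cubic

variable {β β₃ : ℝ} {l : ℝ → ℝ}

theorem cubic_solution_mem_Ioo (hβ₃ : β₃ ≠ 0)
    (hderiv : ∀ t : ℝ, 0 ≤ t → HasDerivAt l (-β * (l t)^2 - β₃ * (l t)^3) t)
    (h0 : l 0 ∈ Ioo 0 (-β/β₃)) {t : ℝ} (ht : 0 ≤ t) : l t ∈ Ioo 0 (-β/β₃) := by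
  have hf : LocallyLipschitz fun y : ℝ => -β * y^2 - β₃ * y^3 :=
    (by fun_prop : ContDiff ℝ 1 fun y : ℝ => -β * y^2 - β₃ * y^3).locallyLipschitz
  refine ODE_solution_mem_Ioo_of_apply_eq_zero hf ht (fun s hs => hderiv s hs.1) (by ring) ?_ h0
  field_simp
  ring

theorem cubic_solution_antitoneOn (hβ₃ : β₃ < 0)
    (hderiv : ∀ t : ℝ, 0 ≤ t → HasDerivAt l (-β * (l t)^2 - β₃ * (l t)^3) t)
    (hmem : ∀ t : ℝ, 0 ≤ t → l t ∈ Ioo 0 (-β/β₃)) : AntitoneOn l (Ici 0) := by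
  refine antitoneOn_of_hasDerivWithinAt_nonpos (convex_Ici 0)
    (fun t ht => (hderiv t ht).continuousAt.continuousWithinAt)
    (fun t ht => (hderiv t (interior_subset ht)).hasDerivWithinAt) fun t ht => ?_
  obtain ⟨hpos, hlt⟩ := hmem t (interior_subset ht)
  nlinarith [mul_pos (pow_pos hpos 2) (add_mul_pos_of_lt_neg_div hβ₃ hlt)]

theorem hasDerivAt_inv_of_cubic {t : ℝ}
    (hderiv : HasDerivAt l (-β * (l t)^2 - β₃ * (l t)^3) t) (hne : l t ≠ 0) :
    HasDerivAt (fun s => (l s)⁻¹) (β + β₃ * l t) t := by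
  refine (hderiv.inv hne).congr_deriv ?_
  field_simp
  ring

theorem cubic_solution_inv_growth (hβ₃ : β₃ ≤ 0)
    (hderiv : ∀ t : ℝ, 0 ≤ t → HasDerivAt l (-β * (l t)^2 - β₃ * (l t)^3) t)
    (hpos : ∀ t : ℝ, 0 ≤ t → 0 < l t) (hanti : AntitoneOn l (Ici 0)) {t : ℝ} (ht : 0 ≤ t) :
    (l 0)⁻¹ + (β + β₃ * l 0) * t ≤ (l t)⁻¹ := by
  have := mul_sub_le_sub_of_hasDerivAt ht
    (fun s hs => hasDerivAt_inv_of_cubic (hderiv s hs.1) (hpos s hs.1).ne') fun s hs =>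
      add_le_add_right (mul_le_mul_of_nonpos_left (hanti self_mem_Ici hs.1 hs.1) hβ₃) β
  rw [sub_zero] at this
  linarith

end Cubic

theorem stmt_18 (β β₃ : ℝ) (hβ : 0 < β) (hβ₃ : β₃ < 0) (l : ℝ → ℝ) (l₀ : ℝ)
    (hl₀ : l₀ ∈ Set.Ioo 0 (-β/β₃)) (hinit : l 0 = l₀)
    (hderiv : ∀ t : ℝ, 0 ≤ t → HasDerivAt l (-β * (l t)^2 - β₃ * (l t)^3) t) :
    (∀ t : ℝ, 0 ≤ t → 0 < l t) ∧ AntitoneOn l (Set.Ici 0) ∧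
      (∀ t : ℝ, 0 ≤ t → l t ≤ 1 / (1/l₀ + (β - |β₃| * l₀) * t)) ∧
      Filter.Tendsto (fun t : ℝ => t * l t) Filter.atTop (nhds (1/β)) := by
  obtain ⟨hpos, hanti⟩ : (∀ t : ℝ, 0 ≤ t → 0 < l t) ∧ AntitoneOn l (Ici 0) := by
    have hmem t (ht : 0 ≤ t) := cubic_solution_mem_Ioo hβ₃.ne hderiv (hinit ▸ hl₀) ht
    exact ⟨fun t ht => (hmem t ht).1, cubic_solution_antitoneOn hβ₃ hderiv hmem⟩
  have hc_eq : β - |β₃| * l₀ = β + β₃ * l₀ := by rw [abs_of_neg hβ₃]; ring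
  have hc : 0 < β + β₃ * l₀ := add_mul_pos_of_lt_neg_div hβ₃ hl₀.2
  have hbound t (ht : 0 ≤ t) : l t ≤ 1 / (1/l₀ + (β - |β₃| * l₀) * t) := by
    rw [hc_eq, one_div, one_div, ← inv_inv (l t)]
    refine inv_anti₀ (by have := hl₀.1; positivity) ?_
    simpa only [hinit] using cubic_solution_inv_growth hβ₃.le hderiv hpos hanti ht
  have hlim : Tendsto l atTop (𝓝 0) := by
    refine squeeze_zero' ((eventually_ge_atTop 0).mono fun t ht => (hpos t ht).le)
      ((eventually_ge_atTop 0).mono hbound) ?_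
    simp only [hc_eq, one_div]
    exact tendsto_inv_atTop_zero.comp
      (tendsto_atTop_add_const_left _ _ (tendsto_id.const_mul_atTop hc))
  have hslope : Tendsto (fun t => (l t)⁻¹ / t) atTop (𝓝 β) :=
    tendsto_div_self_atTop_of_hasDerivAt
      ((eventually_ge_atTop 0).mono fun t ht =>
        hasDerivAt_inv_of_cubic (hderiv t ht) (hpos t ht).ne')
      (by simpa using (hlim.const_mul β₃).const_add β)
  refine ⟨hpos, hanti, hbound, ?_⟩
  rw [one_div]
  refine (hslope.inv₀ hβ.ne').congr' ?_
  filter_upwards [eventually_gt_atTop 0] with t ht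
  rw [inv_div, div_inv_eq_mul]
end
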